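/- arXiv:2510.08701 — 3 statements merged into one kernel-verified Lean document; each statement's English description precedes it below -/
import Mathlib

section
/- Let Λ = ⊕_{i≥0} Λ_i be a locally finite ℕ-graded algebra over a field k (each Λ_i finite-dimensional). If f is an algebra automorphism of Λ satisfying f(Λ_n) ⊆ ⊕_{m≥n} Λ_m for every n ∈ ℕ, then there exists a graded algebra automorphism σ of Λ such that for every n and every x ∈ Λ_n, f(x) - σ(x) ∈ ⊕_{m>n} Λ_m (i.e., σ(x) is the degree-n component of f(x)). -/
/-!
Write `F n = ⨆ m ≥ n, 𝒜 m`. Since `f (F n) ⊆ F n` and `Λ ⧸ F n` is finite-dimensional, the map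
induced by `f` on `Λ ⧸ F n` is a surjective, hence injective, endomorphism; so `f x ∈ F n` forces
`x ∈ F n`. It follows that `x ↦ (f x)ₙ` is surjective, hence bijective, on each `𝒜 n`, and these
maps assemble into a linear automorphism `σ` of `Λ`. It is multiplicative because for `x ∈ 𝒜 i`
and `y ∈ 𝒜 j` the difference
`f (x * y) - (f x)ᵢ * (f y)ⱼ = (f x - (f x)ᵢ) * f y + (f x)ᵢ * (f y - (f y)ⱼ)`
lies in `F (i + j + 1)`.
-/

open DirectSum Function

theorem Submodule.comap_eq_self_of_le_comap {R M : Type*} [CommRing R] [AddCommGroup M]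
    [Module R M] {N : Submodule R M} [Module.Finite R (M ⧸ N)] {f : M →ₗ[R] M}
    (hf : Surjective f) (hN : N ≤ N.comap f) : N.comap f = N := by
  refine le_antisymm (fun x hx => ?_) hN
  have hsurj : Surjective (N.mapQ N f hN) := by
    rintro ⟨y⟩
    obtain ⟨x, rfl⟩ := hf y
    exact ⟨N.mkQ x, rfl⟩
  have : N.mapQ N f hN (N.mkQ x) = N.mapQ N f hN 0 := by
    simpa [Submodule.Quotient.mk_eq_zero] using hx
  simpa [Submodule.Quotient.mk_eq_zero] using
    OrzechProperty.injective_of_surjective_endomorphism _ hsurj this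

theorem map_iSup_ge_le {ι R M : Type*} [Preorder ι] [Semiring R] [AddCommMonoid M] [Module R M]
    {𝒜 : ι → Submodule R M} {φ : M →ₗ[R] M} (hφ : ∀ n, (𝒜 n).map φ ≤ ⨆ m ≥ n, 𝒜 m) (n : ι) :
    (⨆ m ≥ n, 𝒜 m).map φ ≤ ⨆ m ≥ n, 𝒜 m := by
  simp only [Submodule.map_iSup]
  exact iSup₂_le fun m hm => (hφ m).trans (iSup₂_mono' fun j hj => ⟨j, hm.trans hj, le_rfl⟩)

theorem iSup_ge_mul_iSup_ge_le {R A : Type*} [CommSemiring R] [Semiring A] [Algebra R A]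
    (𝒜 : ℕ → Submodule R A) [SetLike.GradedMonoid 𝒜] (a b : ℕ) :
    (⨆ m ≥ a, 𝒜 m) * (⨆ m ≥ b, 𝒜 m) ≤ ⨆ m ≥ a + b, 𝒜 m := by
  simp only [Submodule.iSup_mul, Submodule.mul_iSup]
  exact iSup₂_le fun j hj => iSup₂_le fun i hi =>
    (Submodule.mul_le.2 fun _ hx _ hy => SetLike.mul_mem_graded hx hy).trans
      (le_iSup₂ (f := fun m (_ : m ≥ a + b) => 𝒜 m) (i + j) (add_le_add hi hj))

section Decomposition

variable {ι R M : Type*} [DecidableEq ι] [Semiring R] [AddCommMonoid M] [Module R M]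
  (𝒜 : ι → Submodule R M) [Decomposition 𝒜]

theorem mem_iSup_iff_decompose_eq_zero (p : ι → Prop) (x : M) :
    x ∈ (⨆ i, ⨆ _ : p i, 𝒜 i) ↔ ∀ i, ¬ p i → (decompose 𝒜 x i : M) = 0 := by
  constructor
  · intro hx i hi
    have hker : (⨆ j, ⨆ _ : p j, 𝒜 j) ≤
        LinearMap.ker (component R ι (fun j => 𝒜 j) i ∘ₗ (decomposeLinearEquiv 𝒜).toLinearMap) :=
      iSup₂_le fun j hj y hy => by
        have := decompose_of_mem_ne 𝒜 hy (fun h : j = i => hi (h ▸ hj))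
        simpa [decomposeLinearEquiv_apply, ← apply_eq_component] using this
    simpa [decomposeLinearEquiv_apply, ← apply_eq_component] using hker hx
  · intro h
    classical
    rw [← sum_support_decompose 𝒜 x]
    refine Submodule.sum_mem _ fun i hi => ?_
    have hpi : p i := by
      by_contra hpi
      exact DFinsupp.mem_support_iff.mp hi (Subtype.ext (h i hpi))
    exact Submodule.mem_iSup_of_mem i (Submodule.mem_iSup_of_mem hpi (decompose 𝒜 x i).2)

end Decomposition

section NatGraded

variable {R M : Type*} [CommRing R] [AddCommGroup M] [Module R M]
  (𝒜 : ℕ → Submodule R M) [Decomposition 𝒜]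

theorem sub_decompose_mem_iSup_gt {n : ℕ} {x : M} (hx : x ∈ ⨆ m ≥ n, 𝒜 m) :
    x - decompose 𝒜 x n ∈ ⨆ m > n, 𝒜 m := by
  rw [mem_iSup_iff_decompose_eq_zero] at hx ⊢
  intro m hm
  rw [decompose_sub, DirectSum.sub_apply, Submodule.coe_sub, sub_eq_zero]
  rcases (not_lt.mp hm).eq_or_lt with rfl | hlt
  · rw [decompose_of_mem_same 𝒜 (decompose 𝒜 x m).2]
  · rw [hx m (not_le.mpr hlt), decompose_of_mem_ne 𝒜 (decompose 𝒜 x n).2 hlt.ne']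

theorem decompose_eq_zero_of_mem_iSup_gt {n : ℕ} {x : M} (hx : x ∈ ⨆ m > n, 𝒜 m) :
    (decompose 𝒜 x n : M) = 0 :=
  (mem_iSup_iff_decompose_eq_zero 𝒜 _ x).mp hx n (lt_irrefl n)

instance finite_quotient_iSup_ge [∀ i, Module.Finite R (𝒜 i)] (n : ℕ) :
    Module.Finite R (M ⧸ ⨆ m ≥ n, 𝒜 m) := by
  set P : Submodule R M := ⨆ i : Fin n, 𝒜 i
  have hsup : (⨆ m ≥ n, 𝒜 m) ⊔ P = ⊤ := by
    rw [eq_top_iff, ← (Decomposition.isInternal 𝒜).submodule_iSup_eq_top]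
    refine iSup_le fun i => ?_
    by_cases hi : i < n
    · exact le_sup_of_le_right (le_iSup (fun j : Fin n => 𝒜 j) ⟨i, hi⟩)
    · exact le_sup_of_le_left (le_iSup₂ (f := fun m (_ : m ≥ n) => 𝒜 m) i (not_lt.mp hi))
  refine Module.Finite.of_surjective ((⨆ m ≥ n, 𝒜 m).mkQ ∘ₗ P.subtype) ?_
  rw [← LinearMap.range_eq_top, LinearMap.range_comp, Submodule.range_subtype,
    Submodule.map_mkQ_eq_top, hsup]

noncomputable def gradedPart (φ : M →ₗ[R] M) (n : ℕ) : 𝒜 n →ₗ[R] 𝒜 n :=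
  component R ℕ (fun i => 𝒜 i) n ∘ₗ (decomposeLinearEquiv 𝒜).toLinearMap ∘ₗ φ ∘ₗ (𝒜 n).subtype

theorem gradedPart_apply (φ : M →ₗ[R] M) (n : ℕ) (x : 𝒜 n) :
    (gradedPart 𝒜 φ n x : M) = decompose 𝒜 (φ x) n :=
  rfl

theorem gradedPart_bijective [∀ i, Module.Finite R (𝒜 i)] {φ : M →ₗ[R] M}
    (hφ : Surjective φ) (hφ𝒜 : ∀ n, (𝒜 n).map φ ≤ ⨆ m ≥ n, 𝒜 m) (n : ℕ) :
    Bijective (gradedPart 𝒜 φ n) := by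
  refine OrzechProperty.bijective_of_surjective_endomorphism _ fun y => ?_
  obtain ⟨z, hz⟩ := hφ y
  have hzn : z ∈ ⨆ m ≥ n, 𝒜 m := by
    rw [← Submodule.comap_eq_self_of_le_comap hφ (Submodule.map_le_iff_le_comap.mp
      (map_iSup_ge_le hφ𝒜 n))]
    exact (mem_iSup_iff_decompose_eq_zero 𝒜 _ _).mpr fun m hm => by
      rw [hz, decompose_of_mem_ne 𝒜 y.2 (fun h => hm h.le)]
  refine ⟨decompose 𝒜 z n, Subtype.ext ?_⟩
  -- `⨆ m > n` and `⨆ m ≥ n + 1` agree definitionally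
  have htail : φ (z - decompose 𝒜 z n) ∈ ⨆ m > n, 𝒜 m :=
    map_iSup_ge_le hφ𝒜 (n + 1) ⟨_, sub_decompose_mem_iSup_gt 𝒜 hzn, rfl⟩
  have hcomp := decompose_eq_zero_of_mem_iSup_gt 𝒜 htail
  rw [map_sub, decompose_sub, DirectSum.sub_apply, Submodule.coe_sub, sub_eq_zero, hz,
    decompose_of_mem_same 𝒜 y.2] at hcomp
  rw [gradedPart_apply, ← hcomp]

end NatGraded

section GradedPartEquiv

variable {R M : Type*} [CommRing R] [AddCommGroup M] [Module R M]
  (𝒜 : ℕ → Submodule R M) [Decomposition 𝒜]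
  {φ : M →ₗ[R] M} (hφ : ∀ n, Bijective (gradedPart 𝒜 φ n))

noncomputable def gradedPartEquiv : M ≃ₗ[R] M :=
  decomposeLinearEquiv 𝒜 ≪≫ₗ
    DFinsupp.mapRange.linearEquiv (fun n => LinearEquiv.ofBijective _ (hφ n)) ≪≫ₗ
    (decomposeLinearEquiv 𝒜).symm

theorem gradedPartEquiv_apply_of_mem {n : ℕ} {x : M} (hx : x ∈ 𝒜 n) :
    gradedPartEquiv 𝒜 hφ x = decompose 𝒜 (φ x) n := by
  have hsingle : decompose 𝒜 x = DFinsupp.single n ⟨x, hx⟩ := decompose_of_mem 𝒜 hx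
  rw [gradedPartEquiv, LinearEquiv.trans_apply, LinearEquiv.trans_apply,
    decomposeLinearEquiv_apply, hsingle, DFinsupp.mapRange.linearEquiv_apply,
    DFinsupp.mapRange_single]
  exact decompose_symm_of 𝒜 (gradedPart 𝒜 φ n ⟨x, hx⟩)

theorem map_gradedPartEquiv (n : ℕ) :
    (𝒜 n).map (gradedPartEquiv 𝒜 hφ).toLinearMap = 𝒜 n := by
  refine le_antisymm ?_ fun y hy => ?_
  · rintro _ ⟨x, hx, rfl⟩
    exact (gradedPartEquiv_apply_of_mem 𝒜 hφ hx).symm ▸ (decompose 𝒜 (φ x) n).2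
  · obtain ⟨x, hx⟩ := (hφ n).2 ⟨y, hy⟩
    exact ⟨x, x.2, (gradedPartEquiv_apply_of_mem 𝒜 hφ x.2).trans (congrArg Subtype.val hx)⟩

end GradedPartEquiv

section GradedAlgebra

variable {R A : Type*} [CommRing R] [Ring A] [Algebra R A]
  (𝒜 : ℕ → Submodule R A) [GradedAlgebra 𝒜]

theorem map_mul_of_map_mul_of_mem (ψ : A →ₗ[R] A)
    (h : ∀ ⦃i j : ℕ⦄ ⦃x y : A⦄, x ∈ 𝒜 i → y ∈ 𝒜 j → ψ (x * y) = ψ x * ψ y) (a b : A) :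
    ψ (a * b) = ψ a * ψ b := by
  induction a using Decomposition.inductionOn 𝒜 with
  | zero => simp
  | homogeneous x =>
    induction b using Decomposition.inductionOn 𝒜 with
    | zero => simp
    | homogeneous y => exact h x.2 y.2
    | add b b' hb hb' => simp only [mul_add, map_add, hb, hb']
  | add a a' ha ha' => simp only [add_mul, map_add, ha, ha']

variable {f : A →ₐ[R] A}

theorem decompose_map_mul_of_mem (hf : ∀ n, (𝒜 n).map f.toLinearMap ≤ ⨆ m ≥ n, 𝒜 m)
    {i j : ℕ} {x y : A} (hx : x ∈ 𝒜 i) (hy : y ∈ 𝒜 j) :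
    (decompose 𝒜 (f (x * y)) (i + j) : A) = decompose 𝒜 (f x) i * decompose 𝒜 (f y) j := by
  set px : A := (decompose 𝒜 (f x) i : A)
  set py : A := (decompose 𝒜 (f y) j : A)
  have hfx : f x ∈ ⨆ m ≥ i, 𝒜 m := hf i ⟨x, hx, rfl⟩
  have hfy : f y ∈ ⨆ m ≥ j, 𝒜 m := hf j ⟨y, hy, rfl⟩
  have hpx : px ∈ ⨆ m ≥ i, 𝒜 m := Submodule.mem_iSup_of_mem i <|
    Submodule.mem_iSup_of_mem le_rfl (decompose 𝒜 (f x) i).2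
  have hpy : px * py ∈ 𝒜 (i + j) :=
    SetLike.mul_mem_graded (decompose 𝒜 (f x) i).2 (decompose 𝒜 (f y) j).2
  have h₁ : (f x - px) * f y ∈ ⨆ m ≥ i + j + 1, 𝒜 m := Nat.add_right_comm i 1 j ▸
    iSup_ge_mul_iSup_ge_le 𝒜 (i + 1) j
      (Submodule.mul_mem_mul (sub_decompose_mem_iSup_gt 𝒜 hfx) hfy)
  have h₂ : px * (f y - py) ∈ ⨆ m ≥ i + j + 1, 𝒜 m :=
    iSup_ge_mul_iSup_ge_le 𝒜 i (j + 1)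
      (Submodule.mul_mem_mul hpx (sub_decompose_mem_iSup_gt 𝒜 hfy))
  have hsplit : f (x * y) - px * py = (f x - px) * f y + px * (f y - py) := by
    rw [map_mul]; noncomm_ring
  have := decompose_eq_zero_of_mem_iSup_gt 𝒜 (hsplit ▸ add_mem h₁ h₂)
  rwa [decompose_sub, DirectSum.sub_apply, Submodule.coe_sub, sub_eq_zero,
    decompose_of_mem_same 𝒜 hpy] at this

noncomputable def gradedPartAlgEquiv (hf : ∀ n, (𝒜 n).map f.toLinearMap ≤ ⨆ m ≥ n, 𝒜 m)
    (hbij : ∀ n, Bijective (gradedPart 𝒜 f.toLinearMap n)) : A ≃ₐ[R] A :=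
  AlgEquiv.ofLinearEquiv (gradedPartEquiv 𝒜 hbij)
    (by
      rw [gradedPartEquiv_apply_of_mem 𝒜 hbij (SetLike.one_mem_graded 𝒜),
        AlgHom.toLinearMap_apply, map_one, decompose_of_mem_same 𝒜 (SetLike.one_mem_graded 𝒜)])
    (map_mul_of_map_mul_of_mem 𝒜 _ fun i j x y hx hy => by
      rw [LinearEquiv.coe_coe,
        gradedPartEquiv_apply_of_mem 𝒜 hbij (SetLike.mul_mem_graded hx hy),
        gradedPartEquiv_apply_of_mem 𝒜 hbij hx, gradedPartEquiv_apply_of_mem 𝒜 hbij hy]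
      exact decompose_map_mul_of_mem 𝒜 hf hx hy)

end GradedAlgebra

/-- If `Λ` is a locally finite ℕ-graded algebra over a field `k` and `f` is an
algebra automorphism with `f(Λ_n) ⊆ Λ_{≥ n}` for all `n`, then there is a graded algebra
automorphism `σ` with `f x - σ x ∈ Λ_{> n}` for every homogeneous `x` of degree `n`. -/
theorem stmt0 {k Λ : Type*} [Field k] [Ring Λ] [Algebra k Λ]
    (𝒜 : ℕ → Submodule k Λ) [GradedAlgebra 𝒜]
    [∀ i, FiniteDimensional k (𝒜 i)]
    (f : Λ ≃ₐ[k] Λ)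
    (hf : ∀ n : ℕ, (𝒜 n).map f.toLinearMap ≤ ⨆ m ≥ n, 𝒜 m) :
    ∃ σ : Λ ≃ₐ[k] Λ,
      (∀ n : ℕ, (𝒜 n).map σ.toLinearMap = 𝒜 n) ∧
      ∀ n : ℕ, ∀ x ∈ 𝒜 n, f x - σ x ∈ (⨆ m > n, 𝒜 m : Submodule k Λ) := by
  have hbij := gradedPart_bijective 𝒜 f.surjective hf
  refine ⟨gradedPartAlgEquiv 𝒜 (f := f.toAlgHom) hf hbij, map_gradedPartEquiv 𝒜 hbij,
    fun n x hx => ?_⟩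
  show f x - gradedPartEquiv 𝒜 hbij x ∈ _
  rw [gradedPartEquiv_apply_of_mem 𝒜 hbij hx]
  exact sub_decompose_mem_iSup_gt 𝒜 (hf n ⟨x, hx, rfl⟩)
end

section
/- Let Λ be an ℕ-graded algebra, graded by path length as a homogeneous quotient of the path algebra of a finite quiver, such that every loop of the quiver is nilpotent in Λ. Then every algebra automorphism f of Λ satisfies f(Λ_n) ⊆ ⊕_{m≥n} Λ_m for all n ∈ ℕ; in particular f preserves the graded Jacobson radical Λ_+ = ⊕_{m>0} Λ_m. -/
/-!
Let `π` be the projection onto degree `0`, a ring homomorphism. Its image `Λ₀` is spanned by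
orthogonal idempotents, so it is commutative and reduced. For an arrow `β` and an algebra
homomorphism `f`, `π (f β)` vanishes: if `β` is a loop it is nilpotent in `Λ₀`; otherwise
`β = e_s β e_t` and commutativity of `Λ₀` gives `π (f β) = π (f (e_s e_t)) π (f β) = 0`.
So `f` sends arrows into `Λ_{≥1}`, and since `Λ_{n+1}` is spanned by products of an arrow with
elements of `Λ_n` and the filtration `Λ_{≥n}` is multiplicative, induction on `n` gives
`f (Λ_n) ⊆ Λ_{≥n}`.
-/

open DirectSum Submodule

section OrthogonalIdempotents

variable {k A V : Type*} [Field k] [Ring A] [Algebra k A] [DecidableEq V] {e : V → A}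

theorem commute_of_mem_span_orthogonal_idempotents
    (horth : ∀ v w, e v * e w = if v = w then e v else 0) {x y : A}
    (hx : x ∈ span k (Set.range e)) (hy : y ∈ span k (Set.range e)) : Commute x y := by
  refine Commute.span_left ?_ x hx
  rintro _ ⟨v, rfl⟩
  refine Commute.span_right ?_ y hy
  rintro _ ⟨w, rfl⟩
  rw [Commute, SemiconjBy, horth, horth]
  obtain rfl | h := eq_or_ne v w
  · rfl
  · rw [if_neg h, if_neg h.symm]

theorem eq_zero_of_isNilpotent_of_mem_span_orthogonal_idempotents [Fintype V]
    (horth : ∀ v w, e v * e w = if v = w then e v else 0) {x : A}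
    (hx : x ∈ span k (Set.range e)) (hnil : IsNilpotent x) : x = 0 := by
  obtain ⟨c, rfl⟩ := (mem_span_range_iff_exists_fun k).mp hx
  obtain ⟨m, hm⟩ := hnil
  have hmul : ∀ w, (∑ v, c v • e v) * e w = c w • e w := fun w => by
    simp only [Finset.sum_mul, smul_mul_assoc, horth, smul_ite, smul_zero, Finset.sum_ite_eq',
      Finset.mem_univ, if_true]
  have hpow : ∀ w (p : ℕ), (∑ v, c v • e v) ^ p * e w = c w ^ p • e w := fun w p => by
    induction p with
    | zero => simp
    | succ p ih => rw [pow_succ, mul_assoc, hmul, mul_smul_comm, ih, smul_smul, ← pow_succ']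
  have hterm : ∀ w, c w • e w = 0 := fun w => by
    have := hpow w m
    rw [hm, zero_mul, eq_comm, smul_eq_zero] at this
    exact smul_eq_zero.mpr (this.imp_left eq_zero_of_pow_eq_zero)
  simp [hterm]

end OrthogonalIdempotents

section Filtration

variable {k A : Type*} [CommSemiring k] [Semiring A] [Algebra k A] (𝒜 : ℕ → Submodule k A)

theorem mem_iSup_ge_of_decompose_eq_zero [Decomposition 𝒜] {n : ℕ} {z : A}
    (hz : ∀ m < n, (decompose 𝒜 z m : A) = 0) : z ∈ ⨆ m ≥ n, 𝒜 m := by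
  classical
  rw [← sum_support_decompose 𝒜 z]
  refine sum_mem fun m _ => ?_
  obtain hm | hm := lt_or_ge m n
  · rw [hz m hm]
    exact zero_mem _
  · exact mem_iSup_of_mem m (mem_iSup_of_mem hm (SetLike.coe_mem _))

theorem iSup_ge_mul_iSup_ge_le_s1 [SetLike.GradedMonoid 𝒜] (i j : ℕ) :
    (⨆ m ≥ i, 𝒜 m) * (⨆ m ≥ j, 𝒜 m) ≤ ⨆ m ≥ i + j, 𝒜 m := by
  simp only [iSup_mul, mul_iSup]
  refine iSup₂_le fun q hq => iSup₂_le fun p hp => ?_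
  exact (mul_le.mpr fun _ ha _ hb => SetLike.mul_mem_graded ha hb).trans
    (le_iSup₂_of_le (p + q) (add_le_add hp hq) le_rfl)

theorem mul_mem_iSup_ge [SetLike.GradedMonoid 𝒜] {i j : ℕ} {a b : A}
    (ha : a ∈ ⨆ m ≥ i, 𝒜 m) (hb : b ∈ ⨆ m ≥ j, 𝒜 m) : a * b ∈ ⨆ m ≥ i + j, 𝒜 m :=
  iSup_ge_mul_iSup_ge_le_s1 𝒜 i j (mul_mem_mul ha hb)

theorem map_mem_iSup_ge_of_map_arrows_mem {B E : Type*} [Semiring B] [Algebra k B]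
    (ℬ : ℕ → Submodule k B) [GradedAlgebra ℬ] (ar : E → A)
    (hgen : ∀ n : ℕ, 𝒜 (n + 1) ≤ span k {x | ∃ (β : E) (y : A), y ∈ 𝒜 n ∧ x = ar β * y})
    (f : A →ₐ[k] B) (hf : ∀ β, f (ar β) ∈ ⨆ m ≥ 1, ℬ m) :
    ∀ n, ∀ x ∈ 𝒜 n, f x ∈ ⨆ m ≥ n, ℬ m := by
  intro n
  induction n with
  | zero =>
    exact fun x _ => mem_iSup_ge_of_decompose_eq_zero ℬ fun m hm => absurd hm m.not_lt_zero
  | succ n ih =>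
    refine fun x hx => ((hgen n).trans (span_le.mpr ?_) hx :
      x ∈ (⨆ m ≥ n + 1, ℬ m).comap f.toLinearMap)
    rintro _ ⟨β, y, hy, rfl⟩
    change f (ar β * y) ∈ ⨆ m ≥ n + 1, ℬ m
    rw [map_mul, add_comm]
    exact mul_mem_iSup_ge ℬ (hf β) (ih y hy)

end Filtration

theorem projZeroRingHom_map_arrow_eq_zero {k A V E : Type*} [Field k] [Ring A] [Algebra k A]
    [Fintype V] [DecidableEq V] (𝒜 : ℕ → Submodule k A) [GradedAlgebra 𝒜]
    {s t : E → V} {e : V → A} {ar : E → A}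
    (horth : ∀ v w, e v * e w = if v = w then e v else 0)
    (hsrc : ∀ β, e (s β) * ar β = ar β) (htgt : ∀ β, ar β * e (t β) = ar β)
    (h0 : 𝒜 0 = span k (Set.range e)) (hloop : ∀ β, s β = t β → IsNilpotent (ar β))
    (f : A →ₐ[k] A) (β : E) : GradedRing.projZeroRingHom 𝒜 (f (ar β)) = 0 := by
  set π := GradedRing.projZeroRingHom 𝒜
  have hπ : ∀ x, π x ∈ span k (Set.range e) := fun x => h0 ▸ SetLike.coe_mem _
  by_cases hst : s β = t β
  · exact eq_zero_of_isNilpotent_of_mem_span_orthogonal_idempotents horth (hπ _)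
      (((hloop β hst).map f).map π)
  · have hcomm := commute_of_mem_span_orthogonal_idempotents horth (hπ (f (e (t β))))
      (hπ (f (ar β)))
    calc π (f (ar β)) = π (f (e (s β))) * (π (f (ar β)) * π (f (e (t β)))) := by
          rw [← map_mul, ← map_mul, ← map_mul, ← map_mul, htgt, hsrc]
      _ = π (f (e (s β) * e (t β))) * π (f (ar β)) := by
          rw [← hcomm.eq, ← mul_assoc, map_mul f, map_mul π]
      _ = 0 := by rw [horth, if_neg hst, map_zero, map_zero, zero_mul]

theorem stmt1_general {k A V E : Type*} [Field k] [Ring A] [Algebra k A]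
    [Fintype V] [DecidableEq V]
    (𝒜 : ℕ → Submodule k A) [GradedAlgebra 𝒜]
    (s t : E → V) (e : V → A) (ar : E → A)
    (horth : ∀ v w, e v * e w = if v = w then e v else 0)
    (hsrc : ∀ β, e (s β) * ar β = ar β)
    (htgt : ∀ β, ar β * e (t β) = ar β)
    (h0 : 𝒜 0 = Submodule.span k (Set.range e))
    (hgen : ∀ n : ℕ, 𝒜 (n + 1) ≤
      Submodule.span k {x | ∃ (β : E) (y : A), y ∈ 𝒜 n ∧ x = ar β * y})
    (hloop : ∀ β, s β = t β → IsNilpotent (ar β)) :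
    ∀ f : A ≃ₐ[k] A,
      (∀ n : ℕ, (𝒜 n).map f.toLinearMap ≤ ⨆ m ≥ n, 𝒜 m) ∧
      (⨆ m > 0, 𝒜 m : Submodule k A).map f.toLinearMap ≤ ⨆ m > 0, 𝒜 m := by
  intro f
  have harrow : ∀ β, f (ar β) ∈ ⨆ m ≥ 1, 𝒜 m := fun β =>
    mem_iSup_ge_of_decompose_eq_zero 𝒜 fun m hm => by
      obtain rfl := Nat.lt_one_iff.mp hm
      exact projZeroRingHom_map_arrow_eq_zero 𝒜 horth hsrc htgt h0 hloop f.toAlgHom β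
  have hdeg := map_mem_iSup_ge_of_map_arrows_mem 𝒜 𝒜 ar hgen f.toAlgHom harrow
  refine ⟨fun n => ?_, ?_⟩
  · rintro _ ⟨x, hx, rfl⟩
    exact hdeg n x hx
  · rw [map_le_iff_le_comap]
    refine iSup₂_le fun m hm x hx => ?_
    have hle : (⨆ m' ≥ m, 𝒜 m') ≤ ⨆ m' > 0, 𝒜 m' := biSup_mono fun _ h => hm.trans_le h
    exact hle (hdeg m x hx)

/-- Let `Λ` (here `A`) be an ℕ-graded algebra, graded by path length as a
homogeneous quotient of the path algebra of a finite quiver (encoded by the orthogonal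
idempotents `e v` spanning degree 0, arrows `ar β` of degree 1 with sources `s` and
targets `t`, and degree `n+1` spanned by products arrow · (degree-`n` element)).
If every loop of the quiver is nilpotent in `A`, then every algebra automorphism `f`
satisfies `f(A_n) ⊆ A_{≥ n}` for all `n`; in particular `f` preserves the graded Jacobson
radical `A_+ = ⨆ m > 0, A_m`. -/
theorem stmt1 {k A V E : Type*} [Field k] [Ring A] [Algebra k A]
    [Fintype V] [DecidableEq V]
    (𝒜 : ℕ → Submodule k A) [GradedAlgebra 𝒜]
    (s t : E → V) (e : V → A) (ar : E → A)
    (horth : ∀ v w, e v * e w = if v = w then e v else 0)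
    (hsum : ∑ v, e v = 1)
    (hsrc : ∀ β, e (s β) * ar β = ar β)
    (htgt : ∀ β, ar β * e (t β) = ar β)
    (h0 : 𝒜 0 = Submodule.span k (Set.range e))
    (h1 : ∀ β, ar β ∈ 𝒜 1)
    (hgen : ∀ n : ℕ, 𝒜 (n + 1) ≤
      Submodule.span k {x | ∃ (β : E) (y : A), y ∈ 𝒜 n ∧ x = ar β * y})
    (hloop : ∀ β, s β = t β → IsNilpotent (ar β)) :
    ∀ f : A ≃ₐ[k] A,
      (∀ n : ℕ, (𝒜 n).map f.toLinearMap ≤ ⨆ m ≥ n, 𝒜 m) ∧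
      (⨆ m > 0, 𝒜 m : Submodule k A).map f.toLinearMap ≤ ⨆ m > 0, 𝒜 m :=
  stmt1_general 𝒜 s t e ar horth hsrc htgt h0 hgen hloop
end

section
/- Let A = kQ/I be a (locally) string algebra with at least one arrow α such that αAα ≠ 0. Then there exists a homogeneous central element z of positive degree (the sum of all rotations of the cycle γ_r(α)) such that the k-subspace αAα is spanned by { α z^k : k > 0 }. -/
/-!
In a string algebra an arrow `β` has at most one arrow `δ` with `β δ ≠ 0` and at most one arrow
`γ` with `γ β ≠ 0`. Choosing a successor function `f` accordingly, every nonzero path starting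
with `α` is `α (f α) (f² α) ⋯`. A nonzero `α x α` yields such a path returning to `α`, so `α` is a
periodic point of `f`, say of minimal period `d`. The sum `z` of the `d` rotations of the cycle
`α (f α) ⋯ (f^{d-1} α)` commutes with every arrow `β` (`z β` and `β z` are both the path of
length `d + 1` starting with `β`, or both vanish) and with the vertex idempotents, hence is
central; and `α z^j` is the path of length `j d + 1` along the cycle, and these are exactly the
nonzero paths `α p α`.
-/

open Function

section Walk

variable {A E : Type*} [Ring A] (ar : E → A) (f : E → E)

def walkProd (a : E) (n : ℕ) : A := ((List.iterate f a n).map ar).prod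

variable {ar f}

theorem walkProd_succ (a : E) (n : ℕ) : walkProd ar f a (n + 1) = ar a * walkProd ar f (f a) n := by
  simp [walkProd, List.iterate]

theorem walkProd_add (a : E) (m n : ℕ) :
    walkProd ar f a (m + n) = walkProd ar f a m * walkProd ar f (f^[m] a) n := by
  simp [walkProd, List.iterate_add]

@[simp]
theorem walkProd_one (a : E) : walkProd ar f a 1 = ar a := by
  simp [walkProd, List.iterate]

theorem walkProd_succ' (a : E) (n : ℕ) :
    walkProd ar f a (n + 1) = walkProd ar f a n * ar (f^[n] a) := by
  rw [walkProd_add, walkProd_one]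

theorem walkProd_add_two (a : E) (n : ℕ) :
    walkProd ar f a (n + 2) = ar a * walkProd ar f (f a) n * ar (f^[n + 1] a) := by
  rw [walkProd_succ', walkProd_succ, iterate_succ_apply]

theorem walkProd_ne_zero_of_add_le {a : E} {n : ℕ} (h : walkProd ar f a n ≠ 0) {i m : ℕ}
    (hle : i + m ≤ n) : walkProd ar f (f^[i] a) m ≠ 0 := by
  obtain ⟨r, rfl⟩ := Nat.exists_eq_add_of_le hle
  rw [walkProd_add, walkProd_add] at h
  exact right_ne_zero_of_mul (left_ne_zero_of_mul h)

theorem exists_successor (hr : ∀ β δ δ' : E, ar β * ar δ ≠ 0 → ar β * ar δ' ≠ 0 → δ = δ') :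
    ∃ f : E → E, ∀ β δ, ar β * ar δ ≠ 0 → δ = f β := by
  classical
  refine ⟨fun β => if h : ∃ δ, ar β * ar δ ≠ 0 then h.choose else β, fun β δ hδ => ?_⟩
  have h : ∃ δ, ar β * ar δ ≠ 0 := ⟨δ, hδ⟩
  dsimp only
  rw [dif_pos h]
  exact hr β δ _ hδ h.choose_spec

variable (hf : ∀ β δ, ar β * ar δ ≠ 0 → δ = f β)
include hf

theorem eq_iterate_of_prod_ne_zero {a : E} {l : List E} (h : ((a :: l).map ar).prod ≠ 0) :
    a :: l = List.iterate f a (l.length + 1) := by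
  induction l generalizing a with
  | nil => rfl
  | cons δ l ih =>
    rw [List.map_cons, List.map_cons, List.prod_cons, List.prod_cons] at h
    have hδ : δ = f a := hf a δ (left_ne_zero_of_mul (by rwa [← mul_assoc] at h))
    subst hδ
    rw [List.length_cons, List.iterate, ← ih (by simpa using right_ne_zero_of_mul h)]

theorem eq_iterate_of_walkProd_mul_ne_zero {a β : E} {n : ℕ}
    (h : walkProd ar f a (n + 1) * ar β ≠ 0) : β = f^[n + 1] a := by
  rw [walkProd_succ', mul_assoc] at h
  rw [iterate_succ_apply']
  exact hf _ _ (right_ne_zero_of_mul h)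

theorem sandwich_eq_walkProd {a : E} {l : List E} (h : ar a * (l.map ar).prod * ar a ≠ 0) :
    ar a * (l.map ar).prod * ar a = walkProd ar f a (l.length + 2) := by
  have hl : ((a :: (l ++ [a])).map ar).prod = ar a * (l.map ar).prod * ar a := by
    simp [mul_assoc]
  rw [← hl, eq_iterate_of_prod_ne_zero hf (hl ▸ h)]
  simp [walkProd]

theorem isPeriodicPt_of_sandwich_ne_zero {a : E} {l : List E}
    (h : ar a * (l.map ar).prod * ar a ≠ 0) : IsPeriodicPt f (l.length + 1) a := by
  have hl : ((a :: (l ++ [a])).map ar).prod ≠ 0 := by simpa [mul_assoc] using h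
  have key : (a :: (l ++ [a]))[l.length + 1]? = some a := by simp
  rw [eq_iterate_of_prod_ne_zero hf hl, List.getElem?_iterate _ _ _ _ (by simp)] at key
  exact Option.some_injective _ key

end Walk

section Cycle

theorem exists_minimalPeriod_eq_add_one {E : Type*} {f : E → E} {a : E}
    (ha : a ∈ periodicPts f) : ∃ m, minimalPeriod f a = m + 1 :=
  Nat.exists_eq_add_one_of_ne_zero (minimalPeriod_pos_of_mem_periodicPts ha).ne'

variable {A E : Type*} [Ring A] [DecidableEq E] {ar : E → A} {f : E → E}

variable (f) in
noncomputable def orbitFinset (a : E) : Finset E := (List.iterate f a (minimalPeriod f a)).toFinset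

variable (ar f) in
/-- For `a = α` this is the central element `z` of the paper: the sum of the rotations of the cycle
`γ_r(α)`. -/
noncomputable def cycleSum (a : E) : A := ∑ β ∈ orbitFinset f a, walkProd ar f β (minimalPeriod f a)

theorem cycleSum_mem_span {k : Type*} [Semiring k] [Module k A] (ar : E → A) (f : E → E)
    (a : E) : cycleSum ar f a ∈
      Submodule.span k {y : A | ∃ l : List E, l.length = minimalPeriod f a ∧ y = (l.map ar).prod} :=
  Submodule.sum_mem _ fun _ _ => Submodule.subset_span ⟨_, List.length_iterate .., rfl⟩

variable {a : E}

theorem arrow_mul_apply_ne_zero_of_mem_orbitFinset {n : ℕ} (h : walkProd ar f a n ≠ 0)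
    (hn : minimalPeriod f a < n) {b : E} (hb : b ∈ orbitFinset f a) : ar b * ar (f b) ≠ 0 := by
  simp only [orbitFinset, List.mem_toFinset, List.mem_iterate] at hb
  obtain ⟨m, hm, rfl⟩ := hb
  have h2 := walkProd_ne_zero_of_add_le h (i := m) (m := 2) (by omega)
  rwa [walkProd_succ, walkProd_one] at h2

variable (ha : a ∈ periodicPts f)
include ha

theorem mem_orbitFinset {b : E} : b ∈ orbitFinset f a ↔ ∃ n, f^[n] a = b := by
  simp only [orbitFinset, List.mem_toFinset, List.mem_iterate]
  constructor
  · rintro ⟨m, -, rfl⟩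
    exact ⟨m, rfl⟩
  · rintro ⟨n, rfl⟩
    exact ⟨n % minimalPeriod f a, Nat.mod_lt _ (minimalPeriod_pos_of_mem_periodicPts ha),
      iterate_mod_minimalPeriod_eq.symm⟩

theorem iterate_mem_orbitFinset (n : ℕ) : f^[n] a ∈ orbitFinset f a :=
  (mem_orbitFinset ha).2 ⟨n, rfl⟩

theorem iterate_mem_orbitFinset_of_mem {b : E} (hb : b ∈ orbitFinset f a) (n : ℕ) :
    f^[n] b ∈ orbitFinset f a := by
  obtain ⟨i, rfl⟩ := (mem_orbitFinset ha).1 hb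
  rw [← iterate_add_apply]
  exact iterate_mem_orbitFinset ha _

theorem iterate_minimalPeriod_of_mem_orbitFinset {b : E} (hb : b ∈ orbitFinset f a) :
    f^[minimalPeriod f a] b = b := by
  obtain ⟨n, rfl⟩ := (mem_orbitFinset ha).1 hb
  rw [← iterate_add_apply, add_comm, iterate_add_apply, iterate_minimalPeriod]

theorem exists_mem_orbitFinset_apply_eq {b : E} (hb : b ∈ orbitFinset f a) :
    ∃ b' ∈ orbitFinset f a, f b' = b := by
  obtain ⟨m, hm⟩ := exists_minimalPeriod_eq_add_one ha
  obtain ⟨n, rfl⟩ := (mem_orbitFinset ha).1 hb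
  refine ⟨f^[n + m] a, iterate_mem_orbitFinset ha _, ?_⟩
  rw [← iterate_succ_apply' f, Nat.succ_eq_add_one, add_assoc, ← hm, iterate_add_minimalPeriod_eq]

variable (hf : ∀ β δ, ar β * ar δ ≠ 0 → δ = f β)
include hf

theorem walkProd_mul_cycleSum {b : E} {n : ℕ} (hb : f^[n + 1] b ∈ orbitFinset f a) :
    walkProd ar f b (n + 1) * cycleSum ar f a = walkProd ar f b (n + 1 + minimalPeriod f a) := by
  obtain ⟨m, hm⟩ := exists_minimalPeriod_eq_add_one ha
  rw [cycleSum, Finset.mul_sum, Finset.sum_eq_single_of_mem _ hb, ← walkProd_add]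
  intro β _ hβ
  rw [hm, walkProd_succ β, ← mul_assoc]
  by_contra h
  exact hβ (eq_iterate_of_walkProd_mul_ne_zero hf (left_ne_zero_of_mul h))

theorem cycleSum_mul_arrow (γ : E) : cycleSum ar f a * ar γ =
    if γ ∈ orbitFinset f a then walkProd ar f γ (minimalPeriod f a + 1) else 0 := by
  obtain ⟨m, hm⟩ := exists_minimalPeriod_eq_add_one ha
  have hterm : ∀ β ∈ orbitFinset f a, walkProd ar f β (minimalPeriod f a) * ar γ =
      if β = γ then walkProd ar f γ (minimalPeriod f a + 1) else 0 := by
    intro β hβ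
    split_ifs with hβγ
    · rw [hβγ, walkProd_succ', iterate_minimalPeriod_of_mem_orbitFinset ha (hβγ ▸ hβ)]
    · by_contra h
      rw [hm] at h
      have := eq_iterate_of_walkProd_mul_ne_zero hf h
      rw [← hm, iterate_minimalPeriod_of_mem_orbitFinset ha hβ] at this
      exact hβγ this.symm
  rw [cycleSum, Finset.sum_mul, Finset.sum_congr rfl hterm, Finset.sum_ite_eq']

theorem arrow_mul_cycleSum_pow (j : ℕ) :
    ar a * cycleSum ar f a ^ j = walkProd ar f a (j * minimalPeriod f a + 1) := by
  induction j with
  | zero => simp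
  | succ j ih =>
    rw [pow_succ, ← mul_assoc, ih, walkProd_mul_cycleSum ha hf (iterate_mem_orbitFinset ha _)]
    congr 1
    ring

variable (hpred : ∀ β β' δ, ar β * ar δ ≠ 0 → ar β' * ar δ ≠ 0 → β = β')
  (hcyc : ∀ b ∈ orbitFinset f a, ar b * ar (f b) ≠ 0)
include hpred hcyc

theorem arrow_mul_cycleSum (γ : E) : ar γ * cycleSum ar f a =
    if γ ∈ orbitFinset f a then walkProd ar f γ (minimalPeriod f a + 1) else 0 := by
  split_ifs with hγ
  · rw [← walkProd_one (ar := ar) (f := f) γ, walkProd_mul_cycleSum ha hf (n := 0)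
      (iterate_mem_orbitFinset_of_mem ha hγ 1), add_comm]
  · obtain ⟨m, hm⟩ := exists_minimalPeriod_eq_add_one ha
    rw [cycleSum, Finset.mul_sum]
    refine Finset.sum_eq_zero fun β hβ => ?_
    by_contra h
    rw [hm, walkProd_succ, ← mul_assoc] at h
    obtain ⟨β', hβ', rfl⟩ := exists_mem_orbitFinset_apply_eq ha hβ
    exact hγ (hpred _ _ _ (left_ne_zero_of_mul h) (hcyc β' hβ') ▸ hβ')

theorem commute_cycleSum_arrow (γ : E) : Commute (cycleSum ar f a) (ar γ) := by
  rw [Commute, SemiconjBy, cycleSum_mul_arrow ha hf, arrow_mul_cycleSum ha hf hpred hcyc]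

end Cycle

section Quiver

variable {k A V E : Type*} [CommSemiring k] [Ring A] [Algebra k A]
  {s t : E → V} {e : V → A} {ar : E → A}

theorem commute_of_commute_generators
    (hspan : Submodule.span k (Set.range
      (Sum.elim e (fun l : {l : List E // l ≠ []} => (l.1.map ar).prod))) = ⊤)
    {z : A} (he : ∀ v, Commute z (e v)) (har : ∀ β, Commute z (ar β)) (x : A) :
    Commute z x := by
  suffices hle : ⊤ ≤ Subalgebra.toSubmodule (Subalgebra.centralizer k {z}) from
    Subalgebra.mem_centralizer_iff k |>.1 (hle (Submodule.mem_top (x := x))) z rfl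
  rw [← hspan, Submodule.span_le]
  rintro _ ⟨v | l, rfl⟩
  · exact Subalgebra.mem_centralizer_iff k |>.2 fun _ hz => hz ▸ he v
  · refine Subalgebra.list_prod_mem _ fun y hy => ?_
    obtain ⟨β, -, rfl⟩ := List.mem_map.1 hy
    exact Subalgebra.mem_centralizer_iff k |>.2 fun _ hz => hz ▸ har β

variable [DecidableEq V] (horth : ∀ v w, e v * e w = if v = w then e v else 0)
include horth

theorem commute_vertex_of_mul_eq {x : A} {u : V} (h₁ : e u * x = x) (h₂ : x * e u = x)
    (v : V) : Commute x (e v) := by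
  by_cases huv : u = v
  · subst huv
    exact h₂.trans h₁.symm
  · have h₃ : x * e v = 0 := by rw [← h₂, mul_assoc, horth, if_neg huv, mul_zero]
    have h₄ : e v * x = 0 := by rw [← h₁, ← mul_assoc, horth, if_neg (Ne.symm huv), zero_mul]
    exact h₃.trans h₄.symm

variable (htgt : ∀ β, ar β * e (t β) = ar β)
include htgt

theorem arrow_mul_vertex (β : E) (v : V) : ar β * e v = if t β = v then ar β else 0 := by
  conv_lhs => rw [← htgt β, mul_assoc, horth]
  split_ifs with h
  · exact htgt β
  · rw [mul_zero]

theorem sandwich_mem_of_forall_path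
    (hspan : Submodule.span k (Set.range
      (Sum.elim e (fun l : {l : List E // l ≠ []} => (l.1.map ar).prod))) = ⊤)
    (a : E) (S : Submodule k A) (hS : ∀ l : List E, ar a * (l.map ar).prod * ar a ∈ S)
    (x : A) : ar a * x * ar a ∈ S := by
  let F : A →ₗ[k] A := LinearMap.mulLeft k (ar a) ∘ₗ LinearMap.mulRight k (ar a)
  suffices hle : ⊤ ≤ S.comap F by simpa [F, mul_assoc] using hle (Submodule.mem_top (x := x))
  rw [← hspan, Submodule.span_le]
  rintro _ ⟨v | l, rfl⟩
  · simp only [SetLike.mem_coe, Submodule.mem_comap, Sum.elim_inl, F, LinearMap.comp_apply,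
      LinearMap.mulRight_apply, LinearMap.mulLeft_apply, ← mul_assoc, arrow_mul_vertex horth htgt]
    split_ifs
    · simpa using hS []
    · simp
  · simpa [F, mul_assoc] using hS l.1

variable (hsrc : ∀ β, e (s β) * ar β = ar β)
include hsrc

theorem tgt_eq_src_of_mul_ne_zero {β δ : E} (h : ar β * ar δ ≠ 0) : t β = s δ := by
  by_contra hne
  apply h
  rw [← htgt β, ← hsrc δ, mul_assoc, ← mul_assoc (e _), horth, if_neg hne, zero_mul, mul_zero]

theorem arrow_mul_right_unique
    (hstr2 : ∀ α β β' : E, β ≠ β' → t α = s β → t α = s β' → ar α * ar β = 0 ∨ ar α * ar β' = 0)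
    {β δ δ' : E} (h : ar β * ar δ ≠ 0) (h' : ar β * ar δ' ≠ 0) : δ = δ' := by
  by_contra hne
  exact (hstr2 β δ δ' hne (tgt_eq_src_of_mul_ne_zero horth htgt hsrc h)
    (tgt_eq_src_of_mul_ne_zero horth htgt hsrc h')).elim h h'

theorem arrow_mul_left_unique
    (hstr1 : ∀ α β β' : E, β ≠ β' → t β = s α → t β' = s α → ar β * ar α = 0 ∨ ar β' * ar α = 0)
    {β β' δ : E} (h : ar β * ar δ ≠ 0) (h' : ar β' * ar δ ≠ 0) : β = β' := by
  by_contra hne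
  exact (hstr1 δ β β' hne (tgt_eq_src_of_mul_ne_zero horth htgt hsrc h)
    (tgt_eq_src_of_mul_ne_zero horth htgt hsrc h')).elim h h'

end Quiver

section StringAlgebra

variable {k A V E : Type*} [CommSemiring k] [Ring A] [Algebra k A] [DecidableEq V] [DecidableEq E]
  {s t : E → V} {e : V → A} {ar : E → A} {f : E → E} {a : E}
  (horth : ∀ v w, e v * e w = if v = w then e v else 0)
  (hsrc : ∀ β, e (s β) * ar β = ar β) (htgt : ∀ β, ar β * e (t β) = ar β)

variable (ha : a ∈ periodicPts f) (hcyc : ∀ b ∈ orbitFinset f a, ar b * ar (f b) ≠ 0)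

include horth hsrc htgt ha hcyc in
theorem commute_cycleSum_vertex (v : V) : Commute (cycleSum ar f a) (e v) := by
  obtain ⟨m, hm⟩ := exists_minimalPeriod_eq_add_one ha
  refine Commute.sum_left _ _ _ fun β hβ => commute_vertex_of_mul_eq horth (u := s β) ?_ ?_ v
  · rw [hm, walkProd_succ, ← mul_assoc, hsrc]
  · have hts : t (f^[m] β) = s β := by
      rw [tgt_eq_src_of_mul_ne_zero horth htgt hsrc
          (hcyc _ (iterate_mem_orbitFinset_of_mem ha hβ m)), ← iterate_succ_apply' f,
        Nat.succ_eq_add_one, ← hm, iterate_minimalPeriod_of_mem_orbitFinset ha hβ]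
    rw [hm, walkProd_succ', mul_assoc, arrow_mul_vertex horth htgt, if_pos hts]

include horth htgt ha in
theorem span_arrow_mul_cycleSum_pow
    (hspan : Submodule.span k (Set.range
      (Sum.elim e (fun l : {l : List E // l ≠ []} => (l.1.map ar).prod))) = ⊤)
    (hf : ∀ β δ, ar β * ar δ ≠ 0 → δ = f β) :
    Submodule.span k {y : A | ∃ j : ℕ, 0 < j ∧ y = ar a * cycleSum ar f a ^ j} =
      Submodule.span k {y : A | ∃ x : A, y = ar a * x * ar a} := by
  apply le_antisymm
  · rw [Submodule.span_le]
    rintro _ ⟨j, hj, rfl⟩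
    obtain ⟨m, hm⟩ := Nat.exists_eq_add_one_of_ne_zero
      (Nat.mul_pos hj (minimalPeriod_pos_of_mem_periodicPts ha)).ne'
    refine Submodule.subset_span ⟨walkProd ar f (f a) m, ?_⟩
    rw [arrow_mul_cycleSum_pow ha hf, hm, walkProd_add_two, ← hm,
      ((isPeriodicPt_minimalPeriod f a).const_mul j).eq]
  · rw [Submodule.span_le]
    rintro _ ⟨x, rfl⟩
    refine sandwich_mem_of_forall_path horth htgt hspan a _ (fun l => ?_) x
    by_cases h : ar a * (l.map ar).prod * ar a = 0
    · rw [h]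
      exact zero_mem _
    obtain ⟨j, hj⟩ := (isPeriodicPt_of_sandwich_ne_zero hf h).minimalPeriod_dvd
    rw [mul_comm] at hj
    refine Submodule.subset_span ⟨j, Nat.pos_of_ne_zero (by rintro rfl; simp at hj), ?_⟩
    rw [sandwich_eq_walkProd hf h, arrow_mul_cycleSum_pow ha hf, ← hj]

end StringAlgebra

theorem stmt19_general {k A V E : Type*} [Field k] [Ring A] [Algebra k A]
    [DecidableEq V]
    (s t : E → V) (e : V → A) (ar : E → A)
    (horth : ∀ v w, e v * e w = if v = w then e v else 0)
    (hsrc : ∀ β, e (s β) * ar β = ar β)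
    (htgt : ∀ β, ar β * e (t β) = ar β)
    (hspan : Submodule.span k (Set.range
      (Sum.elim e (fun l : {l : List E // l ≠ []} => (l.1.map ar).prod))) = ⊤)
    (hstr1 : ∀ α β β' : E, β ≠ β' → t β = s α → t β' = s α →
      ar β * ar α = 0 ∨ ar β' * ar α = 0)
    (hstr2 : ∀ α β β' : E, β ≠ β' → t α = s β → t α = s β' →
      ar α * ar β = 0 ∨ ar α * ar β' = 0)
    (a0 : E) (hx : ∃ x : A, ar a0 * x * ar a0 ≠ 0) :
    ∃ (z : A) (d : ℕ), 0 < d ∧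
      (∀ x : A, z * x = x * z) ∧
      z ∈ Submodule.span k {y : A | ∃ l : List E, l.length = d ∧ y = (l.map ar).prod} ∧
      Submodule.span k {y : A | ∃ j : ℕ, 0 < j ∧ y = ar a0 * z ^ j} =
        Submodule.span k {y : A | ∃ x : A, y = ar a0 * x * ar a0} := by
  classical
  obtain ⟨f, hf⟩ := exists_successor fun _ _ _ => arrow_mul_right_unique horth htgt hsrc hstr2
  have hpred : ∀ β β' δ, ar β * ar δ ≠ 0 → ar β' * ar δ ≠ 0 → β = β' :=
    fun _ _ _ => arrow_mul_left_unique horth htgt hsrc hstr1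
  obtain ⟨l, hsandwich⟩ : ∃ l : List E, ar a0 * (l.map ar).prod * ar a0 ≠ 0 := by
    by_contra! h
    obtain ⟨x, hx⟩ := hx
    exact hx (by simpa using sandwich_mem_of_forall_path horth htgt hspan a0 ⊥ (by simpa using h) x)
  have hper := isPeriodicPt_of_sandwich_ne_zero hf hsandwich
  have ha : a0 ∈ periodicPts f := ⟨_, l.length.succ_pos, hper⟩
  have hcyc : ∀ b ∈ orbitFinset f a0, ar b * ar (f b) ≠ 0 := fun _ =>
    arrow_mul_apply_ne_zero_of_mem_orbitFinset (sandwich_eq_walkProd hf hsandwich ▸ hsandwich)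
      (by have := Nat.le_of_dvd l.length.succ_pos hper.minimalPeriod_dvd; omega)
  exact ⟨cycleSum ar f a0, minimalPeriod f a0, minimalPeriod_pos_of_mem_periodicPts ha,
    commute_of_commute_generators hspan (commute_cycleSum_vertex horth hsrc htgt ha hcyc)
      (commute_cycleSum_arrow ha hf hpred hcyc),
    cycleSum_mem_span ar f a0, span_arrow_mul_cycleSum_pow horth htgt ha hspan hf⟩

/-- Let `A = kQ/I` be a (locally) string algebra -- encoded, as in the other
statements, by stationary paths `e v`, arrows `ar β` of a finite quiver with the monomial
path basis (`hspan`, `hli`), vertex in/out-degrees at most 2 (`hout`, `hin`) and the string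
conditions on compositions of arrows (`hstr1`, `hstr2`) -- and let `α = ar a0` be an arrow
with `αAα ≠ 0`. Then there exists a homogeneous central element `z` of positive degree `d`
(the sum of all rotations of the cycle `γ_r(α)`) such that `αAα` is spanned by
`{α·z^j : j > 0}`. -/
theorem stmt19 {k A V E : Type*} [Field k] [Ring A] [Algebra k A]
    [Fintype V] [DecidableEq V] [Fintype E]
    (s t : E → V) (e : V → A) (ar : E → A)
    (horth : ∀ v w, e v * e w = if v = w then e v else 0)
    (hsum : ∑ v, e v = 1)
    (hsrc : ∀ β, e (s β) * ar β = ar β)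
    (htgt : ∀ β, ar β * e (t β) = ar β)
    (hspan : Submodule.span k (Set.range
      (Sum.elim e (fun l : {l : List E // l ≠ []} => (l.1.map ar).prod))) = ⊤)
    (hli : LinearIndependent k
      (fun i : {i : V ⊕ {l : List E // l ≠ []} //
          Sum.elim e (fun l : {l : List E // l ≠ []} => (l.1.map ar).prod) i ≠ 0} =>
        Sum.elim e (fun l : {l : List E // l ≠ []} => (l.1.map ar).prod) i.1))
    (hout : ∀ β₁ β₂ β₃ : E, s β₁ = s β₂ → s β₂ = s β₃ → β₁ = β₂ ∨ β₁ = β₃ ∨ β₂ = β₃)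
    (hin : ∀ β₁ β₂ β₃ : E, t β₁ = t β₂ → t β₂ = t β₃ → β₁ = β₂ ∨ β₁ = β₃ ∨ β₂ = β₃)
    (hstr1 : ∀ α β β' : E, β ≠ β' → t β = s α → t β' = s α →
      ar β * ar α = 0 ∨ ar β' * ar α = 0)
    (hstr2 : ∀ α β β' : E, β ≠ β' → t α = s β → t α = s β' →
      ar α * ar β = 0 ∨ ar α * ar β' = 0)
    (a0 : E) (hx : ∃ x : A, ar a0 * x * ar a0 ≠ 0) :
    ∃ (z : A) (d : ℕ), 0 < d ∧
      (∀ x : A, z * x = x * z) ∧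
      z ∈ Submodule.span k {y : A | ∃ l : List E, l.length = d ∧ y = (l.map ar).prod} ∧
      Submodule.span k {y : A | ∃ j : ℕ, 0 < j ∧ y = ar a0 * z ^ j} =
        Submodule.span k {y : A | ∃ x : A, y = ar a0 * x * ar a0} :=
  stmt19_general s t e ar horth hsrc htgt hspan hstr1 hstr2 a0 hx
end
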